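/- The family of behaviors of spliffers is not closed under complementation: over the alphabet A = {a,b} (a ≠ b), there exists a set X ⊆ U that is the behavior of a spliffer with finitely many states such that the complement U \ X is not the behavior of any spliffer with finitely many states. -/

import Mathlib

/-- Words over the alphabet `A`, i.e. elements of the free monoid `A*`. -/
abbrev Word (A : Type) := List A

/-- The generating set `G = {(a,ε,a) : a ∈ A} ∪ {(ε,a,a) : a ∈ A}` of the
Shuffling Monoid. -/
def genG (A : Type) : Set (Word A × Word A × Word A) :=
  {g | ∃ a : A, g = ([a], [], [a]) ∨ g = ([], [a], [a])}

/-- Componentwise product (concatenation) of a list of triples of words. -/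
def prodTriple {A : Type} (ls : List (Word A × Word A × Word A)) :
    Word A × Word A × Word A :=
  ((ls.map fun l => l.1).flatten, (ls.map fun l => l.2.1).flatten,
    (ls.map fun l => l.2.2).flatten)

/-- The Shuffling Monoid `U`: the submonoid of `A* × A* × A*` generated by `G`,
described as the set of all products of finite sequences of generators. -/
def shuffleU (A : Type) : Set (Word A × Word A × Word A) :=
  {m | ∃ ls : List (Word A × Word A × Word A), (∀ l ∈ ls, l ∈ genG A) ∧ prodTriple ls = m}

/-- A spliffer (equivalently, splitter) over `A`: a finite automaton whose
transitions are labeled by elements of `G`. -/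
structure Spliffer (A : Type) where
  Q : Type
  finQ : Finite Q
  E : Q → (Word A × Word A × Word A) → Q → Prop
  I : Set Q
  T : Set Q
  labels_mem : ∀ {q l q'}, E q l q' → l ∈ genG A

/-- Paths in a spliffer, recording the sequence of labels. -/
inductive Spliffer.Path {A : Type} (S : Spliffer A) :
    S.Q → List (Word A × Word A × Word A) → S.Q → Prop
  | nil (q : S.Q) : Spliffer.Path S q [] q
  | cons {q q' q'' : S.Q} {l : Word A × Word A × Word A}
      {ls : List (Word A × Word A × Word A)} :
      S.E q l q' → Spliffer.Path S q' ls q'' → Spliffer.Path S q (l :: ls) q''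

/-- The behavior `|S|` of a spliffer: products of the label sequences of all
successful runs. -/
def Spliffer.behavior {A : Type} (S : Spliffer A) : Set (Word A × Word A × Word A) :=
  {m | ∃ q ∈ S.I, ∃ q' ∈ S.T, ∃ ls, S.Path q ls q' ∧ prodTriple ls = m}

/-- A splitter is deterministic if it has a single initial state, for every state
and input letter there is at most one outgoing transition reading that letter,
and all transitions leaving a given state write to the same tape. -/
def Spliffer.Deterministic {A : Type} (S : Spliffer A) : Prop :=
  (∃! i, i ∈ S.I) ∧
  (∀ ⦃q l₁ q₁ l₂ q₂⦄, S.E q l₁ q₁ → S.E q l₂ q₂ → l₁.2.2 = l₂.2.2 → l₁ = l₂ ∧ q₁ = q₂) ∧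
  (∀ ⦃q l₁ q₁ l₂ q₂⦄, S.E q l₁ q₁ → S.E q l₂ q₂ →
    (l₁.1 = [] ∧ l₂.1 = []) ∨ (l₁.2.1 = [] ∧ l₂.2.1 = []))

/-!
The witness spliffer reads both tapes in any interleaving until it meets the `b` of the first
tape, and afterwards only the second tape; its behavior consists of the triples
`(aⁿb, aᵐb, aᵏbaⁿ⁺ᵐ⁻ᵏb)` with `n ≤ k ≤ n + m`. The triple `(aᴺ⁺¹b, aᴺb, aᴺbaᴺ⁺¹b)` has
`k < n`, so it lies in the complement, and every run producing it starts by reading `aᴺb` from the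
second tape alone: the first `b` of the output cannot come from the first tape, which has `N + 1`
letters `a` in front of its `b`. If `N` is a pumping length of a spliffer recognizing the
complement, pumping inside this prefix gives a run producing `(aᴺ⁺¹b, aᴺ⁺ᵈb, aᴺ⁺ᵈbaᴺ⁺¹b)` with
`d > 0`, a triple of the witness's behavior.
-/

open List

namespace Spliffer

variable {A : Type}

def toNFA (S : Spliffer A) : NFA (Word A × Word A × Word A) S.Q where
  step q l := {q' | S.E q l q'}
  start := S.I
  accept := S.T

variable {S : Spliffer A}

theorem path_iff_nonempty_path {q q' : S.Q} {ls : List (Word A × Word A × Word A)} :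
    S.Path q ls q' ↔ Nonempty (S.toNFA.Path q q' ls) := by
  constructor
  · intro h
    induction h with
    | nil q => exact ⟨.nil q⟩
    | cons e _ ih => exact ⟨.cons _ _ _ _ _ e ih.some⟩
  · rintro ⟨p⟩
    induction p with
    | nil q => exact .nil q
    | cons _ _ _ _ _ e _ ih => exact .cons e ih

theorem mem_toNFA_accepts {ls : List (Word A × Word A × Word A)} :
    ls ∈ S.toNFA.accepts ↔ ∃ q ∈ S.I, ∃ q' ∈ S.T, S.Path q ls q' := by
  simp only [NFA.accepts_iff_exists_path, path_iff_nonempty_path]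
  rfl

theorem mem_behavior_iff {m : Word A × Word A × Word A} :
    m ∈ S.behavior ↔ ∃ ls ∈ S.toNFA.accepts, prodTriple ls = m := by
  simp only [behavior, mem_toNFA_accepts]
  grind

theorem Path.append {q r q' : S.Q} {xs ys : List (Word A × Word A × Word A)}
    (hx : S.Path q xs r) (hy : S.Path r ys q') : S.Path q (xs ++ ys) q' := by
  induction hx with
  | nil => exact hy
  | cons e _ ih => exact .cons e (ih hy)

theorem Path.replicate {q : S.Q} {l : Word A × Word A × Word A} (h : S.E q l q) (n : ℕ) :
    S.Path q (List.replicate n l) q := by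
  induction n with
  | zero => exact .nil q
  | succ n ih => exact .cons h ih

theorem Path.mem_genG {q q' : S.Q} {ls : List (Word A × Word A × Word A)}
    (h : S.Path q ls q') : ∀ l ∈ ls, l ∈ genG A := by
  induction h with
  | nil => simp
  | cons e _ ih => exact List.forall_mem_cons.2 ⟨S.labels_mem e, ih⟩

theorem mem_genG_of_mem_accepts {ls : List (Word A × Word A × Word A)}
    (h : ls ∈ S.toNFA.accepts) : ∀ l ∈ ls, l ∈ genG A := by
  obtain ⟨_, _, _, _, hp⟩ := mem_toNFA_accepts.1 h
  exact hp.mem_genG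

theorem behavior_subset_shuffleU : S.behavior ⊆ shuffleU A := by
  rintro _ ⟨_, _, _, _, ls, hp, rfl⟩
  exact ⟨ls, hp.mem_genG, rfl⟩

variable (S) in
theorem exists_pumping_length : ∃ N : ℕ, ∀ ls ∈ S.toNFA.accepts, N ≤ ls.length →
    ∃ x y z, ls = x ++ y ++ z ∧ x.length + y.length ≤ N ∧ y ≠ [] ∧
      x ++ y ++ y ++ z ∈ S.toNFA.accepts := by
  have := S.finQ
  have := Fintype.ofFinite S.Q
  refine ⟨Fintype.card (Set S.Q), fun ls hls hlen => ?_⟩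
  obtain ⟨x, y, z, rfl, hxy, hy, hpump⟩ := S.toNFA.pumping_lemma hls hlen
  refine ⟨x, y, z, rfl, hxy, hy, hpump ?_⟩
  rw [append_assoc x y y]
  refine Language.append_mem_mul (Language.append_mem_mul rfl ?_) rfl
  exact Language.mem_kstar.2 ⟨[y, y], by simp, by simp; rfl⟩

end Spliffer

section Shuffle

variable {A : Type}

def genFst (c : A) : Word A × Word A × Word A := ([c], [], [c])

def genSnd (c : A) : Word A × Word A × Word A := ([], [c], [c])

theorem genFst_mem_genG (c : A) : genFst c ∈ genG A := ⟨c, .inl rfl⟩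

theorem genSnd_mem_genG (c : A) : genSnd c ∈ genG A := ⟨c, .inr rfl⟩

@[simp]
theorem prodTriple_nil : prodTriple ([] : List (Word A × Word A × Word A)) = ([], [], []) := rfl

@[simp]
theorem prodTriple_cons (l : Word A × Word A × Word A) (ls : List (Word A × Word A × Word A)) :
    prodTriple (l :: ls) =
      (l.1 ++ (prodTriple ls).1, l.2.1 ++ (prodTriple ls).2.1, l.2.2 ++ (prodTriple ls).2.2) := by
  simp [prodTriple]

@[simp]
theorem prodTriple_append (xs ys : List (Word A × Word A × Word A)) :
    prodTriple (xs ++ ys) =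
      ((prodTriple xs).1 ++ (prodTriple ys).1, (prodTriple xs).2.1 ++ (prodTriple ys).2.1,
        (prodTriple xs).2.2 ++ (prodTriple ys).2.2) := by
  simp [prodTriple]

@[simp]
theorem prodTriple_replicate_genFst (n : ℕ) (c : A) :
    prodTriple (replicate n (genFst c)) = (replicate n c, [], replicate n c) := by
  induction n with
  | zero => rfl
  | succ n ih => rw [replicate_succ, prodTriple_cons, ih]; rfl

@[simp]
theorem prodTriple_replicate_genSnd (n : ℕ) (c : A) :
    prodTriple (replicate n (genSnd c)) = ([], replicate n c, replicate n c) := by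
  induction n with
  | zero => rfl
  | succ n ih => rw [replicate_succ, prodTriple_cons, ih]; rfl

theorem eq_map_genSnd_of_prodTriple_fst_eq_nil {ls : List (Word A × Word A × Word A)}
    (hgen : ∀ l ∈ ls, l ∈ genG A) (h : (prodTriple ls).1 = []) :
    ls = (prodTriple ls).2.2.map genSnd := by
  induction ls with
  | nil => rfl
  | cons l ls ih =>
    simp only [forall_mem_cons] at hgen
    obtain ⟨⟨c, rfl | rfl⟩, hgen⟩ := hgen
    · simp at h
    · simp only [prodTriple_cons, nil_append] at h
      simp only [prodTriple_cons, genSnd, cons_append, nil_append, map_cons]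
      exact congrArg _ (ih hgen h)

variable {a b : A}

theorem exists_eq_append_genSnd (hab : a ≠ b) {ls : List (Word A × Word A × Word A)}
    {p j r : ℕ} {u v w : Word A} (hgen : ∀ l ∈ ls, l ∈ genG A) (hrp : r < p)
    (h : prodTriple ls = (replicate p a ++ u, replicate j a ++ b :: v, replicate r a ++ b :: w)) :
    j ≤ r ∧ ∃ B rest, ls = B ++ genSnd b :: rest ∧
      prodTriple B = (replicate (r - j) a, replicate j a, replicate r a) := by
  induction ls generalizing p j r with
  | nil => simp at h
  | cons l ls ih =>
    simp only [forall_mem_cons] at hgen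
    obtain ⟨⟨c, rfl | rfl⟩, hgen⟩ := hgen
    · obtain ⟨p, rfl⟩ : ∃ p', p = p' + 1 := ⟨p - 1, by omega⟩
      cases r with
      | zero =>
        simp only [prodTriple_cons, replicate_succ, replicate_zero, cons_append, nil_append,
          Prod.mk.injEq, cons.injEq] at h
        exact absurd (h.1.1.symm.trans h.2.2.1) hab
      | succ r =>
        simp only [prodTriple_cons, replicate_succ, cons_append, nil_append,
          Prod.mk.injEq, cons.injEq] at h
        obtain ⟨⟨rfl, h₁⟩, h₂, -, h₃⟩ := h
        obtain ⟨hjr, B, rest, rfl, hB⟩ := ih hgen (by omega) (Prod.ext h₁ (Prod.ext h₂ h₃))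
        refine ⟨by omega, genFst c :: B, rest, rfl, ?_⟩
        rw [prodTriple_cons, hB, show r + 1 - j = r - j + 1 by omega]
        rfl
    · simp only [prodTriple_cons, nil_append, cons_append, Prod.mk.injEq] at h
      obtain ⟨h₁, h₂, h₃⟩ := h
      cases r with
      | zero =>
        cases j with
        | zero =>
          simp only [replicate_zero, nil_append, cons.injEq] at h₃
          rw [h₃.1]
          exact ⟨le_rfl, [], ls, rfl, rfl⟩
        | succ j =>
          simp only [replicate_succ, replicate_zero, cons_append, nil_append, cons.injEq] at h₂ h₃
          exact absurd (h₂.1.symm.trans h₃.1) hab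
      | succ r =>
        cases j with
        | zero =>
          simp only [replicate_succ, replicate_zero, cons_append, nil_append, cons.injEq] at h₂ h₃
          exact absurd (h₃.1.symm.trans h₂.1) hab
        | succ j =>
          simp only [replicate_succ, cons_append, cons.injEq] at h₂ h₃
          obtain ⟨rfl, h₂⟩ := h₂
          obtain ⟨hjr, B, rest, rfl, hB⟩ := ih hgen (by omega) (Prod.ext h₁ (Prod.ext h₂ h₃.2))
          refine ⟨by omega, genSnd c :: B, rest, rfl, ?_⟩
          rw [prodTriple_cons, hB, Nat.add_sub_add_right]
          rfl

def shuffleTriple (a b : A) (n m k : ℕ) : Word A × Word A × Word A :=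
  (replicate n a ++ [b], replicate m a ++ [b],
    replicate k a ++ b :: (replicate (n + m - k) a ++ [b]))

theorem prodTriple_replicate_genSnd_append {n m k : ℕ} (j : ℕ)
    {ls : List (Word A × Word A × Word A)}
    (h : prodTriple ls = shuffleTriple a b n m k) :
    prodTriple (replicate j (genSnd a) ++ ls) = shuffleTriple a b n (j + m) (j + k) := by
  simp only [prodTriple_append, prodTriple_replicate_genSnd, h, shuffleTriple, nil_append,
    ← append_assoc, replicate_append_replicate]
  rw [show n + (j + m) - (j + k) = n + m - k by omega]

theorem shuffleTriple_mem_shuffleU (a b : A) (N : ℕ) :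
    shuffleTriple a b (N + 1) N N ∈ shuffleU A := by
  refine ⟨replicate N (genSnd a) ++ genSnd b :: (replicate (N + 1) (genFst a) ++ [genFst b]),
    ?_, ?_⟩
  · simp only [mem_append, mem_cons, mem_replicate, not_mem_nil, or_false]
    rintro l (⟨-, rfl⟩ | rfl | ⟨-, rfl⟩ | rfl)
    exacts [genSnd_mem_genG a, genSnd_mem_genG b, genFst_mem_genG a, genFst_mem_genG b]
  · simp only [prodTriple_append, prodTriple_cons, prodTriple_replicate_genFst,
      prodTriple_replicate_genSnd, prodTriple_nil]
    simp [shuffleTriple, genFst, genSnd]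

theorem eq_replicate_genSnd_append_of_prodTriple_eq (hab : a ≠ b) {N : ℕ}
    {ls : List (Word A × Word A × Word A)} (hgen : ∀ l ∈ ls, l ∈ genG A)
    (h : prodTriple ls = shuffleTriple a b (N + 1) N N) :
    ∃ rest, ls = replicate N (genSnd a) ++ genSnd b :: rest := by
  obtain ⟨-, B, rest, rfl, hB⟩ :=
    exists_eq_append_genSnd hab (u := [b]) (v := []) hgen (Nat.lt_succ_self N) h
  have hfst : (prodTriple B).1 = [] := by simp [hB]
  refine ⟨rest, ?_⟩
  rw [eq_map_genSnd_of_prodTriple_fst_eq_nil (fun l hl => hgen l (mem_append_left _ hl)) hfst,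
    hB, map_replicate]

end Shuffle

theorem List.append_append_append_eq_replicate_append {α : Type*} {x y z t : List α} {g : α}
    {N : ℕ} (h : x ++ y ++ z = replicate N g ++ t) (hN : x.length + y.length ≤ N) :
    x ++ y ++ y ++ z = replicate y.length g ++ (x ++ y ++ z) := by
  have hxy : x ++ y = replicate (x.length + y.length) g := by
    have := congrArg (take (x.length + y.length)) h
    rwa [← length_append, take_left' rfl, length_append, take_append_of_le_length (by simpa),
      take_replicate, min_eq_left hN] at this
  obtain ⟨i, rfl⟩ : ∃ i, x = replicate i g :=
    ⟨_, eq_replicate_iff.2 ⟨rfl, fun e he => eq_of_mem_replicate (hxy ▸ mem_append_left _ he)⟩⟩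
  obtain ⟨k, rfl⟩ : ∃ k, y = replicate k g :=
    ⟨_, eq_replicate_iff.2 ⟨rfl, fun e he => eq_of_mem_replicate (hxy ▸ mem_append_right _ he)⟩⟩
  simp only [length_replicate, ← append_assoc, replicate_append_replicate]
  rw [Nat.add_comm k]

section Witness

variable {A : Type} (a b : A)

def witnessSpliffer : Spliffer A where
  Q := Fin 3
  finQ := inferInstance
  E q l q' :=
    (q = 0 ∧ q' = 0 ∧ (l = genFst a ∨ l = genSnd a)) ∨ (q = 0 ∧ q' = 1 ∧ l = genFst b) ∨
    (q = 1 ∧ q' = 1 ∧ l = genSnd a) ∨ (q = 1 ∧ q' = 2 ∧ l = genSnd b)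
  I := {0}
  T := {2}
  labels_mem := by
    rintro q l q' (⟨-, -, rfl | rfl⟩ | ⟨-, -, rfl⟩ | ⟨-, -, rfl⟩ | ⟨-, -, rfl⟩)
    exacts [genFst_mem_genG a, genSnd_mem_genG a, genFst_mem_genG b, genSnd_mem_genG a,
      genSnd_mem_genG b]

theorem shuffleTriple_mem_behavior_witnessSpliffer {n m k : ℕ} (hnk : n ≤ k) (hkm : k ≤ n + m) :
    shuffleTriple a b n m k ∈ (witnessSpliffer a b).behavior := by
  refine ⟨(0 : Fin 3), rfl, (2 : Fin 3), rfl,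
    replicate n (genFst a) ++ replicate (k - n) (genSnd a) ++
      genFst b :: (replicate (n + m - k) (genSnd a) ++ [genSnd b]), ?_, ?_⟩
  · exact ((Spliffer.Path.replicate (Or.inl ⟨rfl, rfl, Or.inl rfl⟩) n).append
      (Spliffer.Path.replicate (Or.inl ⟨rfl, rfl, Or.inr rfl⟩) _)).append
      (.cons (Or.inr (Or.inl ⟨rfl, rfl, rfl⟩))
        ((Spliffer.Path.replicate (Or.inr (Or.inr (Or.inl ⟨rfl, rfl, rfl⟩))) _).append
          (.cons (Or.inr (Or.inr (Or.inr ⟨rfl, rfl, rfl⟩))) (.nil _))))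
  · simp only [prodTriple_append, prodTriple_cons, prodTriple_replicate_genFst,
      prodTriple_replicate_genSnd, prodTriple_nil]
    simp only [shuffleTriple, genFst, genSnd, nil_append, append_nil, cons_append,
      ← append_assoc, replicate_append_replicate]
    rw [show k - n + (n + m - k) = m by omega, Nat.add_sub_cancel' hnk]

variable {a b}

theorem witnessSpliffer_not_path (hab : a ≠ b) (N : ℕ) (rest : List (Word A × Word A × Word A))
    (q : Fin 3) :
    ¬ (witnessSpliffer a b).Path (0 : Fin 3) (replicate N (genSnd a) ++ genSnd b :: rest) q := by
  induction N with
  | zero =>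
    rintro (_ | ⟨e, -⟩)
    rcases e with ⟨-, -, h | h⟩ | ⟨-, -, h⟩ | ⟨h, -⟩ | ⟨h, -⟩
    · simp [genFst, genSnd] at h
    · exact hab (by simpa [genSnd] using h.symm)
    · simp [genFst, genSnd] at h
    · exact absurd h (by decide)
    · exact absurd h (by decide)
  | succ N ih =>
    rw [replicate_succ, cons_append]
    rintro (_ | ⟨e, hp⟩)
    rcases e with ⟨-, rfl, -⟩ | ⟨-, -, h⟩ | ⟨h, -⟩ | ⟨h, -⟩
    · exact ih hp
    · simp [genFst, genSnd] at h
    · exact absurd h (by decide)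
    · exact absurd h (by decide)

theorem shuffleTriple_not_mem_behavior_witnessSpliffer (hab : a ≠ b) (N : ℕ) :
    shuffleTriple a b (N + 1) N N ∉ (witnessSpliffer a b).behavior := by
  rintro ⟨q, rfl, q', -, ls, hp, h⟩
  obtain ⟨rest, rfl⟩ := eq_replicate_genSnd_append_of_prodTriple_eq hab hp.mem_genG h
  exact witnessSpliffer_not_path hab N rest q' hp

end Witness

theorem rat_not_closed_under_complement_general {A : Type} (a b : A) (hab : a ≠ b) :
    ∃ X : Set (Word A × Word A × Word A), X ⊆ shuffleU A ∧
      (∃ S : Spliffer A, S.behavior = X) ∧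
      ¬ ∃ S : Spliffer A, S.behavior = shuffleU A \ X := by
  refine ⟨(witnessSpliffer a b).behavior, Spliffer.behavior_subset_shuffleU, ⟨_, rfl⟩, ?_⟩
  rintro ⟨S, hS⟩
  obtain ⟨N, hpump⟩ := S.exists_pumping_length
  obtain ⟨ls, hls, hprod⟩ :
      ∃ ls ∈ S.toNFA.accepts, prodTriple ls = shuffleTriple a b (N + 1) N N := by
    rw [← Spliffer.mem_behavior_iff, hS]
    exact ⟨shuffleTriple_mem_shuffleU a b N, shuffleTriple_not_mem_behavior_witnessSpliffer hab N⟩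
  obtain ⟨rest, hrest⟩ :=
    eq_replicate_genSnd_append_of_prodTriple_eq hab (Spliffer.mem_genG_of_mem_accepts hls) hprod
  obtain ⟨x, y, z, rfl, hxy, hy, hpumped⟩ := hpump _ hls (by simp [hrest])
  rw [append_append_append_eq_replicate_append hrest hxy] at hpumped
  have hmem := Spliffer.mem_behavior_iff.2 ⟨_, hpumped, rfl⟩
  rw [hS, prodTriple_replicate_genSnd_append _ hprod] at hmem
  have := length_pos_iff.2 hy
  exact hmem.2 (shuffleTriple_mem_behavior_witnessSpliffer a b (by omega) (by omega))

/-- over `A = {a,b}`, the family of behaviors of spliffers is not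
closed under complementation: some behavior `X ⊆ U` of a spliffer has a
complement `U \ X` which is not the behavior of any spliffer. -/
theorem rat_not_closed_under_complement {A : Type} (a b : A) (hab : a ≠ b)
    (hA : ∀ x : A, x = a ∨ x = b) :
    ∃ X : Set (Word A × Word A × Word A), X ⊆ shuffleU A ∧
      (∃ S : Spliffer A, S.behavior = X) ∧
      ¬ ∃ S : Spliffer A, S.behavior = shuffleU A \ X :=
  rat_not_closed_under_complement_general a b hab
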